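/- arXiv:2511.22591 — 2 statements merged into one kernel-verified Lean document; each statement's English description precedes it below -/
import Mathlib

section
/- Let a, b be distinct points of the open unit disk 𝔹² ⊂ ℂ. Define cen := (a(1−|b|²) + b(1−|a|²))/(2 − a·conj(b) − conj(a)·b), p := (a(1−|b|²) + b(1−|a|²))/(2 − |a|² − |b|²), and the hyperbolic midpoint m := (a(1−|b|²) + b(1−|a|²))/(1 − |a|²|b|² + √((1−|a|²)(1−|b|²))·|1 − conj(a)·b|). Then ρ(cen, m) = ρ(m, p), i.e. m is the hyperbolic midpoint of the segment [cen, p]. -/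
/-!
All three points are `N / r` for the common numerator `N` and positive real denominators
`r₁ = 2 - 2 Re(a b̄)`, `r₂ = 2 - |a|² - |b|²`, `r₃ = 1 - |a|²|b|² + S c`, where
`S = √((1 - |a|²)(1 - |b|²))` and `c = |1 - ā b|`. So they lie on the diameter through `N`, and
`ρ(N/r, N/s) = 2 arsinh (|N| |s - r| / √((r² - |N|²)(s² - |N|²)))`. With `Q = r₁ + r₂`,
one checks `r₁² - |N|² = c² Q`, `r₂² - |N|² = S² Q`, `r₃ - r₁ = c (S - c)` and
`r₂ - r₃ = S (S - c)`; the factors `c` and `S` then cancel from the two distances.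
-/

open Complex

/-- The hyperbolic distance of the unit disk:
`ρ(x,y) = 2·arsinh(|x−y|/√((1−|x|²)(1−|y|²)))`. -/
noncomputable def hypDist (x y : ℂ) : ℝ :=
  2 * Real.arsinh (‖x - y‖ /
    Real.sqrt ((1 - (‖x‖)^2) * (1 - (‖y‖)^2)))

open ComplexConjugate

lemma hypDist_div_ofReal_div_ofReal (N : ℂ) {r s : ℝ} (hr : 0 < r) (hs : 0 < s) :
    hypDist (N / r) (N / s) =
      2 * Real.arsinh (‖N‖ * |s - r| / √((r ^ 2 - ‖N‖ ^ 2) * (s ^ 2 - ‖N‖ ^ 2))) := by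
  have hdiff : N / r - N / s = N * ((s - r : ℝ) : ℂ) / ((r * s : ℝ) : ℂ) := by
    have : (r : ℂ) ≠ 0 := by exact_mod_cast hr.ne'
    have : (s : ℂ) ≠ 0 := by exact_mod_cast hs.ne'
    push_cast; field_simp
  have hnorm (x : ℝ) (hx : 0 < x) : 1 - ‖N / x‖ ^ 2 = (x ^ 2 - ‖N‖ ^ 2) / x ^ 2 := by
    rw [norm_div, norm_real, Real.norm_of_nonneg hx.le]
    field_simp
  rw [hypDist, hdiff, hnorm r hr, hnorm s hs, norm_div, norm_mul, norm_real, norm_real,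
    Real.norm_eq_abs, Real.norm_of_nonneg (by positivity),
    div_mul_div_comm, ← mul_pow, Real.sqrt_div' _ (by positivity),
    Real.sqrt_sq (by positivity), div_div_div_cancel_right₀ (by positivity)]

lemma hypDist_ray_eq (N : ℂ) {r₁ r₂ r₃ : ℝ} (S c Q : ℝ)
    (hr₁ : 0 < r₁) (hr₂ : 0 < r₂) (hr₃ : 0 < r₃) (hS : S ≠ 0) (hc : c ≠ 0)
    (h₁ : r₁ ^ 2 - ‖N‖ ^ 2 = c ^ 2 * Q) (h₂ : r₂ ^ 2 - ‖N‖ ^ 2 = S ^ 2 * Q)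
    (h₃₁ : r₃ - r₁ = c * (S - c)) (h₂₃ : r₂ - r₃ = S * (S - c)) :
    hypDist (N / r₁) (N / r₃) = hypDist (N / r₃) (N / r₂) := by
  rw [hypDist_div_ofReal_div_ofReal N hr₁ hr₃, hypDist_div_ofReal_div_ofReal N hr₃ hr₂,
    h₁, h₂, h₃₁, h₂₃]
  set X := r₃ ^ 2 - ‖N‖ ^ 2
  rw [mul_assoc, mul_comm X, mul_assoc, Real.sqrt_mul (sq_nonneg _),
    Real.sqrt_mul (sq_nonneg _), Real.sqrt_sq_eq_abs, Real.sqrt_sq_eq_abs, abs_mul, abs_mul,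
    mul_left_comm, mul_left_comm ‖N‖, mul_div_mul_left _ _ (abs_ne_zero.mpr hc),
    mul_div_mul_left _ _ (abs_ne_zero.mpr hS), mul_comm Q]

lemma two_sub_mul_conj_sub_conj_mul (a b : ℂ) :
    2 - a * conj b - conj a * b = ((2 - 2 * (a * conj b).re : ℝ) : ℂ) := by
  have : conj a * b = conj (a * conj b) := by simp [mul_comm]
  rw [this, sub_sub, add_conj]
  push_cast; ring

lemma norm_one_sub_conj_mul_sq (a b : ℂ) :
    ‖1 - conj a * b‖ ^ 2 = 1 - 2 * (a * conj b).re + ‖a‖ ^ 2 * ‖b‖ ^ 2 := by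
  simp only [Complex.sq_norm, normSq_sub, normSq_one, map_mul, normSq_conj, one_mul,
    conj_conj]
  ring_nf

lemma norm_one_sub_conj_mul_pos {a b : ℂ} (ha : ‖a‖ < 1) (hb : ‖b‖ < 1) :
    0 < ‖1 - conj a * b‖ := by
  refine norm_pos_iff.mpr (sub_ne_zero.mpr fun h ↦ ?_)
  have := congrArg norm h
  rw [norm_one, norm_mul, norm_conj] at this
  nlinarith [norm_nonneg a, norm_nonneg b]

lemma norm_mul_ofReal_add_mul_ofReal_sq (a b : ℂ) (x y : ℝ) :
    ‖a * x + b * y‖ ^ 2 = x ^ 2 * ‖a‖ ^ 2 + y ^ 2 * ‖b‖ ^ 2 + 2 * x * y * (a * conj b).re := by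
  simp only [Complex.sq_norm, normSq_add, normSq_ofReal, map_mul, conj_ofReal,
    mul_re, mul_im, ofReal_re, ofReal_im]
  ring

theorem stmt_3_general (a b : ℂ) (ha : ‖a‖ < 1) (hb : ‖b‖ < 1) :
    let cen : ℂ := (a * (1 - (‖b‖ : ℂ)^2) + b * (1 - (‖a‖ : ℂ)^2)) /
      (2 - a * (starRingEnd ℂ b) - (starRingEnd ℂ a) * b)
    let p : ℂ := (a * (1 - (‖b‖ : ℂ)^2) + b * (1 - (‖a‖ : ℂ)^2)) /
      (2 - (‖a‖ : ℂ)^2 - (‖b‖ : ℂ)^2)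
    let m : ℂ := (a * (1 - (‖b‖ : ℂ)^2) + b * (1 - (‖a‖ : ℂ)^2)) /
      ((1 : ℂ) - (‖a‖ : ℂ)^2 * (‖b‖ : ℂ)^2 +
        ((Real.sqrt ((1 - (‖a‖)^2) * (1 - (‖b‖)^2)) : ℝ) : ℂ) *
          ((‖1 - (starRingEnd ℂ a) * b‖ : ℝ) : ℂ))
    hypDist cen m = hypDist m p := by
  intro cen p m
  set N := a * (1 - (‖b‖ : ℂ)^2) + b * (1 - (‖a‖ : ℂ)^2)
  set t := (a * conj b).re
  set S := √((1 - ‖a‖ ^ 2) * (1 - ‖b‖ ^ 2))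
  set c := ‖1 - conj a * b‖
  have hcen : cen = N / ((2 - 2 * t : ℝ) : ℂ) := by
    rw [← two_sub_mul_conj_sub_conj_mul]
  have hp : p = N / ((2 - ‖a‖ ^ 2 - ‖b‖ ^ 2 : ℝ) : ℂ) := by
    push_cast; rfl
  have hm : m = N / ((1 - ‖a‖ ^ 2 * ‖b‖ ^ 2 + S * c : ℝ) : ℂ) := by
    push_cast; rfl
  have hu : ‖a‖ ^ 2 < 1 := by nlinarith [norm_nonneg a]
  have hv : ‖b‖ ^ 2 < 1 := by nlinarith [norm_nonneg b]
  have hS : 0 < S := Real.sqrt_pos.mpr (by nlinarith)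
  have hS2 : S ^ 2 = (1 - ‖a‖ ^ 2) * (1 - ‖b‖ ^ 2) := Real.sq_sqrt (by nlinarith)
  have hc : 0 < c := norm_one_sub_conj_mul_pos ha hb
  have hc2 : c ^ 2 = 1 - 2 * t + ‖a‖ ^ 2 * ‖b‖ ^ 2 := norm_one_sub_conj_mul_sq a b
  have hN2 : ‖N‖ ^ 2 = (1 - ‖b‖ ^ 2) ^ 2 * ‖a‖ ^ 2 + (1 - ‖a‖ ^ 2) ^ 2 * ‖b‖ ^ 2
      + 2 * (1 - ‖b‖ ^ 2) * (1 - ‖a‖ ^ 2) * t := by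
    rw [← norm_mul_ofReal_add_mul_ofReal_sq]; push_cast; rfl
  rw [hcen, hp, hm]
  refine hypDist_ray_eq N S c ((2 - 2 * t) + (2 - ‖a‖ ^ 2 - ‖b‖ ^ 2)) ?_ ?_ ?_ hS.ne' hc.ne'
    ?_ ?_ ?_ ?_
  · nlinarith
  · linarith
  · nlinarith [mul_pos hS hc]
  · linear_combination -hN2 - (4 - 2 * t - ‖a‖ ^ 2 - ‖b‖ ^ 2) * hc2
  · linear_combination -hN2 - (4 - 2 * t - ‖a‖ ^ 2 - ‖b‖ ^ 2) * hS2
  · linear_combination hc2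
  · linear_combination -hS2

/-- Lemma 2.4: the hyperbolic midpoint `m` of `a` and `b` is also the hyperbolic midpoint
of the segment `[cen, p]`. -/
theorem stmt_3 (a b : ℂ) (ha : ‖a‖ < 1) (hb : ‖b‖ < 1) (hab : a ≠ b) :
    let cen : ℂ := (a * (1 - (‖b‖ : ℂ)^2) + b * (1 - (‖a‖ : ℂ)^2)) /
      (2 - a * (starRingEnd ℂ b) - (starRingEnd ℂ a) * b)
    let p : ℂ := (a * (1 - (‖b‖ : ℂ)^2) + b * (1 - (‖a‖ : ℂ)^2)) /
      (2 - (‖a‖ : ℂ)^2 - (‖b‖ : ℂ)^2)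
    let m : ℂ := (a * (1 - (‖b‖ : ℂ)^2) + b * (1 - (‖a‖ : ℂ)^2)) /
      ((1 : ℂ) - (‖a‖ : ℂ)^2 * (‖b‖ : ℂ)^2 +
        ((Real.sqrt ((1 - (‖a‖)^2) * (1 - (‖b‖)^2)) : ℝ) : ℂ) *
          ((‖1 - (starRingEnd ℂ a) * b‖ : ℝ) : ℂ))
    hypDist cen m = hypDist m p :=
  stmt_3_general a b ha hb
end

section
/- Let u, v, w be pairwise distinct complex numbers of modulus 1, and for z ∈ ℂ with |z| = 1, z ≠ w and uv ≠ wz define F(z) := ((uv − uw − vw)z + uvw)/(−wz + uv). Then F(z) lies on the line through u and v and on the line through z and w; in particular F(u) = u and F(v) = v. -/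
open Complex ComplexConjugate

/-!
On the unit circle conjugation is inversion, so a chord satisfies
`conj (a - b) = -(a - b) / (a * b)`; the products `uv` and `wz` lie on the circle as well.
A point `p` lies on the line through `a ≠ b` iff `(p - a) / (b - a)` is self-conjugate.
The factorizations
`F z - u = v (u - z) (w - u) / (uv - wz)` and `F z - z = w (z - u) (z - v) / (uv - wz)`
write both ratios as quotients of chords, so their conjugates can be computed directly.
The first factorization at `z = u`, and its mirror image under `u ↔ v`, give `F u = u`, `F v = v`.
-/

lemma conj_eq_inv_of_norm_eq_one {a : ℂ} (ha : ‖a‖ = 1) : conj a = a⁻¹ := by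
  rw [inv_def, normSq_eq_norm_sq, ha]
  simp

lemma conj_sub_of_norm_eq_one {a b : ℂ} (ha : ‖a‖ = 1) (hb : ‖b‖ = 1) :
    conj (a - b) = -(a - b) / (a * b) := by
  have ha0 : a ≠ 0 := ne_zero_of_norm_ne_zero (ha ▸ one_ne_zero)
  have hb0 : b ≠ 0 := ne_zero_of_norm_ne_zero (hb ▸ one_ne_zero)
  rw [map_sub, conj_eq_inv_of_norm_eq_one ha, conj_eq_inv_of_norm_eq_one hb]
  field_simp
  ring

lemma exists_real_eq_add_smul_of_conj_div_eq {p a b : ℂ} (hab : a ≠ b)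
    (h : conj ((p - a) / (b - a)) = (p - a) / (b - a)) :
    ∃ t : ℝ, p = a + t • (b - a) := by
  obtain ⟨t, ht⟩ := conj_eq_iff_real.mp h
  refine ⟨t, ?_⟩
  rw [real_smul, ← ht, div_mul_cancel₀ _ (sub_ne_zero.mpr hab.symm)]
  ring

noncomputable def lis (u v w z : ℂ) : ℂ :=
  ((u * v - u * w - v * w) * z + u * v * w) / (-(w * z) + u * v)

section Lis

variable {u v w z : ℂ}

lemma lis_comm (u v w z : ℂ) : lis u v w z = lis v u w z := by
  unfold lis
  ring

lemma lis_sub_left (h : u * v ≠ w * z) :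
    lis u v w z - u = v * (u - z) * (w - u) / (u * v - w * z) := by
  have hD : -(w * z) + u * v ≠ 0 := by rw [neg_add_eq_sub]; exact sub_ne_zero.mpr h
  unfold lis
  field_simp
  ring

lemma lis_sub_right (h : u * v ≠ w * z) :
    lis u v w z - z = w * (z - u) * (z - v) / (u * v - w * z) := by
  have hD : -(w * z) + u * v ≠ 0 := by rw [neg_add_eq_sub]; exact sub_ne_zero.mpr h
  unfold lis
  field_simp
  ring

lemma lis_self_left (hu : u ≠ 0) (hvw : v ≠ w) : lis u v w u = u := by
  have h : u * v ≠ w * u := fun h => hvw (mul_left_cancel₀ hu (by linear_combination h))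
  rw [← sub_eq_zero, lis_sub_left h, sub_self, mul_zero, zero_mul, zero_div]

lemma exists_lis_eq_add_smul_left (hu : ‖u‖ = 1) (hv : ‖v‖ = 1) (hw : ‖w‖ = 1)
    (hz : ‖z‖ = 1) (huv : u ≠ v) (h : u * v ≠ w * z) :
    ∃ t : ℝ, lis u v w z = u + t • (v - u) := by
  have hu0 : u ≠ 0 := ne_zero_of_norm_ne_zero (hu ▸ one_ne_zero)
  have hv0 : v ≠ 0 := ne_zero_of_norm_ne_zero (hv ▸ one_ne_zero)
  have hw0 : w ≠ 0 := ne_zero_of_norm_ne_zero (hw ▸ one_ne_zero)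
  have hz0 : z ≠ 0 := ne_zero_of_norm_ne_zero (hz ▸ one_ne_zero)
  have hvu : v - u ≠ 0 := sub_ne_zero.mpr huv.symm
  have hD : u * v - w * z ≠ 0 := sub_ne_zero.mpr h
  apply exists_real_eq_add_smul_of_conj_div_eq huv
  rw [lis_sub_left h]
  simp only [map_div₀, map_mul, conj_eq_inv_of_norm_eq_one hv, conj_sub_of_norm_eq_one hu hz,
    conj_sub_of_norm_eq_one hw hu, conj_sub_of_norm_eq_one hv hu,
    conj_sub_of_norm_eq_one (by simp [hu, hv] : ‖u * v‖ = 1) (by simp [hw, hz] : ‖w * z‖ = 1)]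
  field_simp

lemma exists_lis_eq_add_smul_right (hu : ‖u‖ = 1) (hv : ‖v‖ = 1) (hw : ‖w‖ = 1)
    (hz : ‖z‖ = 1) (hzw : z ≠ w) (h : u * v ≠ w * z) :
    ∃ t : ℝ, lis u v w z = z + t • (w - z) := by
  have hu0 : u ≠ 0 := ne_zero_of_norm_ne_zero (hu ▸ one_ne_zero)
  have hv0 : v ≠ 0 := ne_zero_of_norm_ne_zero (hv ▸ one_ne_zero)
  have hw0 : w ≠ 0 := ne_zero_of_norm_ne_zero (hw ▸ one_ne_zero)
  have hz0 : z ≠ 0 := ne_zero_of_norm_ne_zero (hz ▸ one_ne_zero)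
  have hwz : w - z ≠ 0 := sub_ne_zero.mpr hzw.symm
  have hD : u * v - w * z ≠ 0 := sub_ne_zero.mpr h
  apply exists_real_eq_add_smul_of_conj_div_eq hzw
  rw [lis_sub_right h]
  simp only [map_div₀, map_mul, conj_eq_inv_of_norm_eq_one hw, conj_sub_of_norm_eq_one hz hu,
    conj_sub_of_norm_eq_one hz hv, conj_sub_of_norm_eq_one hw hz,
    conj_sub_of_norm_eq_one (by simp [hu, hv] : ‖u * v‖ = 1) (by simp [hw, hz] : ‖w * z‖ = 1)]
  field_simp

end Lis

/-- Lemma 3.12 (2): for `u, v, w` pairwise distinct on the unit circle and `z` on the unit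
circle with `z ≠ w`, `uv ≠ wz`, the point `F(z) = ((uv−uw−vw)z+uvw)/(−wz+uv)` lies on the
line through `u, v` and on the line through `z, w`; in particular `F(u) = u`, `F(v) = v`. -/
theorem stmt_11 (u v w : ℂ)
    (hu : ‖u‖ = 1) (hv : ‖v‖ = 1) (hw : ‖w‖ = 1)
    (huv : u ≠ v) (huw : u ≠ w) (hvw : v ≠ w) :
    let F : ℂ → ℂ := fun z => ((u * v - u * w - v * w) * z + u * v * w) / (-(w * z) + u * v)
    (∀ z : ℂ, ‖z‖ = 1 → z ≠ w → u * v ≠ w * z →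
      (∃ t : ℝ, F z = u + t • (v - u)) ∧ (∃ t : ℝ, F z = z + t • (w - z))) ∧
    F u = u ∧ F v = v := by
  intro F
  have hu0 : u ≠ 0 := ne_zero_of_norm_ne_zero (hu ▸ one_ne_zero)
  have hv0 : v ≠ 0 := ne_zero_of_norm_ne_zero (hv ▸ one_ne_zero)
  refine ⟨fun z hz hzw h => ⟨?_, ?_⟩, lis_self_left hu0 hvw, ?_⟩
  · exact exists_lis_eq_add_smul_left hu hv hw hz huv h
  · exact exists_lis_eq_add_smul_right hu hv hw hz hzw h
  · exact (lis_comm u v w v).trans (lis_self_left hv0 huw)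
end
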